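/- Let F = (f_1,…,f_k) : (ℝ^n,0) → (ℝ^k,0) be a non-constant real analytic map germ, 2 ≤ k ≤ n−1, satisfying Milnor's conditions (a) and (b) at the origin, and write φ = (f_1,…,f_{k−1}) and g = f_k. Let C > 0 and the integer N > 0 be such that ‖F(x)‖ ≥ C‖x‖^N for x ∈ Σ_{F,ρ} \ V near 0. Then for ε > 0 small enough there exists δ_ε > 0 such that for every δ ∈ ℝ^{k−1} with 0 < ‖δ‖ < δ_ε, all critical points of the restriction of g to φ^{-1}(δ) ∩ S_ε lie in the set {|g| ≥ (√3/2) C ε^N}. -/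

import Mathlib

open Metric Set Filter Topology RealInnerProductSpace

noncomputable section

/-- `ℝⁿ` with its Euclidean structure. -/
abbrev Euc (n : ℕ) : Type := EuclideanSpace ℝ (Fin n)

/-- The square of the distance to the origin. -/
def sqDist (n : ℕ) : Euc n → ℝ := fun x => ‖x‖ ^ 2

/-- The map `F = (f 0, …, f (k-1)) : ℝⁿ → ℝᵏ` with components `f i`. -/
def mapOf {n k : ℕ} (f : Fin k → Euc n → ℝ) : Euc n → Euc k :=
  fun x => (WithLp.equiv 2 (Fin k → ℝ)).symm fun i => f i x

/-- The zero set `V = F⁻¹(0)`. -/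
def zeroSet {n k : ℕ} (f : Fin k → Euc n → ℝ) : Set (Euc n) := {x | ∀ i, f i x = 0}

/-- `Σ_F` : the set of points where the gradients `∇f₁, …, ∇f_k` are linearly dependent. -/
def sigmaF {n k : ℕ} (f : Fin k → Euc n → ℝ) : Set (Euc n) :=
  {x | ¬ LinearIndependent ℝ fun i : Fin k => gradient (f i) x}

/-- `Σ_{F,ρ}` : the set of points where `∇ρ, ∇f₁, …, ∇f_k` are linearly dependent. -/
def sigmaFRho {n k : ℕ} (f : Fin k → Euc n → ℝ) : Set (Euc n) :=
  {x | ¬ LinearIndependent ℝ fun j : Option (Fin k) =>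
      j.elim (gradient (sqDist n) x) fun i => gradient (f i) x}

/-- `F` is a real analytic map germ `(ℝⁿ,0) → (ℝᵏ,0)` :
all components vanish at the origin and are analytic near the origin. -/
def AnalyticGermAtZero {n k : ℕ} (f : Fin k → Euc n → ℝ) : Prop :=
  (∀ i, f i 0 = 0) ∧ ∀ i, ∀ᶠ x in 𝓝 (0 : Euc n), AnalyticAt ℝ (f i) x

/-- The germ of `F` at the origin is non-constant. -/
def NonConstantGerm {n k : ℕ} (f : Fin k → Euc n → ℝ) : Prop :=
  ¬ ∀ᶠ x in 𝓝 (0 : Euc n), ∀ i, f i x = f i 0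

/-- Milnor's condition (a) : `Σ_F ⊆ V` in a neighbourhood of the origin. -/
def MilnorCondA {n k : ℕ} (f : Fin k → Euc n → ℝ) : Prop :=
  ∀ᶠ x in 𝓝 (0 : Euc n), x ∈ sigmaF f → x ∈ zeroSet f

/-- Milnor's condition (b) : `0` is isolated in `V ∩ closure (Σ_{F,ρ} \ V)`. -/
def MilnorCondB {n k : ℕ} (f : Fin k → Euc n → ℝ) : Prop :=
  ∀ᶠ x in 𝓝 (0 : Euc n), x ∈ zeroSet f ∩ closure (sigmaFRho f \ zeroSet f) → x = 0

/-- `ε` is a Milnor radius for `F` at the origin. -/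
def MilnorRadius {n k : ℕ} (f : Fin k → Euc n → ℝ) (ε : ℝ) : Prop :=
  0 < ε ∧ closedBall (0 : Euc n) ε ∩ closure (sigmaF f \ zeroSet f) = ∅ ∧
    closedBall (0 : Euc n) ε ∩ (zeroSet f ∩ closure (sigmaFRho f \ zeroSet f)) ⊆ {0}

open Classical in
/-- The Euler characteristic of a topological space, defined (classically, via choice) as the
alternating sum of the numbers of simplices of a finite simplicial complex triangulating it;
the junk value `0` is used for spaces admitting no finite triangulation. -/
def eulerChar (X : Type*) [TopologicalSpace X] : ℤ :=
  if h : ∃ p : Σ N : ℕ, Geometry.SimplicialComplex ℝ (EuclideanSpace ℝ (Fin N)),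
      p.2.faces.Finite ∧ Nonempty (X ≃ₜ p.2.space) then
    ∑ s ∈ h.choose_spec.1.toFinset, (-1 : ℤ) ^ (s.card + 1)
  else 0

/-- The restriction `p : E → B` is the projection of a locally trivial fibre bundle. -/
def IsLocTrivFibration {X Y : Type*} [TopologicalSpace X] [TopologicalSpace Y]
    (p : X → Y) (E : Set X) (B : Set Y) : Prop :=
  (∀ x ∈ E, p x ∈ B) ∧ ∃ (F : Type) (_ : TopologicalSpace F), ∀ b ∈ B,
    ∃ U : Set Y, IsOpen U ∧ b ∈ U ∧
      ∃ φ : {x : X // x ∈ E ∧ p x ∈ U} ≃ₜ (↥(U ∩ B)) × F,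
        ∀ x, ((φ x).1 : Y) = p x.1

/-- Tangent vectors to a subset `Y ⊆ ℝⁿ` at a point `q`, as velocities of curves in `Y`. -/
def tangentVecs {n : ℕ} (Y : Set (Euc n)) (q : Euc n) : Set (Euc n) :=
  {v | ∃ γ : ℝ → Euc n, γ 0 = q ∧ (∀ᶠ t in 𝓝 (0 : ℝ), γ t ∈ Y) ∧ HasDerivAt γ v 0}

/-- `q` is a critical point of the restriction `g|_Y`. -/
def IsCritPtOn {n : ℕ} (g : Euc n → ℝ) (Y : Set (Euc n)) (q : Euc n) : Prop :=
  q ∈ Y ∧ ∀ v ∈ tangentVecs Y q, fderiv ℝ g q v = 0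

/-- A set is semianalytic if locally it is a finite union of sets defined by
analytic equations and strict analytic inequalities. -/
def IsSemianalytic {E : Type*} [NormedAddCommGroup E] [NormedSpace ℝ E] (A : Set E) : Prop :=
  ∀ x : E, ∃ U : Set E, IsOpen U ∧ x ∈ U ∧ ∃ (p q : ℕ)
    (f : Fin p → E → ℝ) (g : Fin p → Fin q → E → ℝ),
    (∀ i, ∀ y ∈ U, AnalyticAt ℝ (f i) y) ∧ (∀ i j, ∀ y ∈ U, AnalyticAt ℝ (g i j) y) ∧
    A ∩ U = ⋃ i : Fin p, {y ∈ U | f i y = 0 ∧ ∀ j, 0 < g i j y}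

/-- A set is subanalytic if locally it is the projection of a relatively compact
semianalytic set. -/
def Subanalytic {E : Type*} [NormedAddCommGroup E] [NormedSpace ℝ E] (A : Set E) : Prop :=
  ∀ x : E, ∃ U : Set E, IsOpen U ∧ x ∈ U ∧ ∃ (m : ℕ)
    (B : Set (E × EuclideanSpace ℝ (Fin m))),
    IsSemianalytic B ∧ IsCompact (closure B) ∧ A ∩ U = Prod.fst '' B

/-- A function is subanalytic if its graph is a subanalytic set. -/
def SubanalyticFun {E : Type*} [NormedAddCommGroup E] [NormedSpace ℝ E] (g : E → ℝ) : Prop :=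
  Subanalytic {p : E × ℝ | p.2 = g p.1}

/-- `Y` is a smooth (`C^∞`) embedded submanifold of `ℝⁿ` of dimension `d` :
near each of its points it can be smoothly flattened onto a `d`-dimensional
coordinate subspace. -/
def IsSmoothSubmanifold {n : ℕ} (Y : Set (Euc n)) (d : ℕ) : Prop :=
  ∀ y ∈ Y, ∃ φ : PartialHomeomorph (Euc n) (Euc n),
    y ∈ φ.source ∧ ContDiffOn ℝ (⊤ : ℕ∞) φ φ.source ∧ ContDiffOn ℝ (⊤ : ℕ∞) φ.symm φ.target ∧
    Y ∩ φ.source = {x ∈ φ.source | ∀ i : Fin n, d ≤ (i : ℕ) → φ x i = 0}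

/-- `d` is the local topological degree at the origin of `v : ℝⁿ → ℝⁿ` (with `v⁻¹(0) = {0}`
near `0`), characterised as the sum of the signs of the Jacobian determinant of `v` at the
preimages, in a small ball around the origin, of any sufficiently small regular value. -/
def IsLocalDegree {n : ℕ} (v : Euc n → Euc n) (d : ℤ) : Prop :=
  ∃ ε₀ > (0:ℝ), (∀ x : Euc n, ‖x‖ ≤ ε₀ → v x = 0 → x = 0) ∧
    ∀ ε : ℝ, 0 < ε → ε ≤ ε₀ → ∃ η > (0:ℝ), ∀ y : Euc n, 0 < ‖y‖ → ‖y‖ < η →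
      (∀ x, ‖x‖ ≤ ε → v x = y → (fderiv ℝ v x).det ≠ 0) →
      ∀ s : Finset (Euc n), (↑s = {x : Euc n | ‖x‖ ≤ ε ∧ v x = y}) →
        d = ∑ x ∈ s, (if 0 < (fderiv ℝ v x).det then (1:ℤ) else -1)

open Classical in
/-- The local topological degree at the origin `deg₀ v` (junk value `0` if there is none). -/
def deg₀ {n : ℕ} (v : Euc n → Euc n) : ℤ :=
  if h : ∃ d, IsLocalDegree v d then h.choose else 0

/-- If `u` is a linearly independent family in a finite-dimensional real inner product space,
the joint map `x ↦ (⟪u j, x⟫)ⱼ` is surjective. -/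
lemma aux_range_pi_toDual {E : Type*} [NormedAddCommGroup E] [InnerProductSpace ℝ E]
    [FiniteDimensional ℝ E] {r : ℕ} {u : Fin r → E} (hu : LinearIndependent ℝ u) :
    LinearMap.range ((ContinuousLinearMap.pi
      fun j => (InnerProductSpace.toDual ℝ E (u j) : E →L[ℝ] ℝ)) : E →ₗ[ℝ] (Fin r → ℝ)) = ⊤ := by
  set M : E →L[ℝ] (Fin r → ℝ) :=
    ContinuousLinearMap.pi fun j => (InnerProductSpace.toDual ℝ E (u j) : E →L[ℝ] ℝ) with hM
  set K : Submodule ℝ E := Submodule.span ℝ (Set.range u) with hK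
  have hker : LinearMap.ker (M : E →ₗ[ℝ] (Fin r → ℝ)) = Kᗮ := by
    ext x
    constructor
    · intro hx
      have hx' : ∀ j, ⟪u j, x⟫ = 0 := by
        intro j
        have := congrFun (LinearMap.mem_ker.1 hx) j
        simpa [hM, ContinuousLinearMap.pi_apply, InnerProductSpace.toDual_apply_apply] using this
      rw [Submodule.mem_orthogonal]
      intro y hy
      obtain ⟨c, rfl⟩ := (Submodule.mem_span_range_iff_exists_fun ℝ).1 hy
      rw [sum_inner]
      exact Finset.sum_eq_zero fun j _ => by rw [real_inner_smul_left, hx' j, mul_zero]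
    · intro hx
      rw [LinearMap.mem_ker]
      funext j
      have := (Submodule.mem_orthogonal K x).1 hx (u j) (Submodule.subset_span ⟨j, rfl⟩)
      simpa [hM, ContinuousLinearMap.pi_apply, InnerProductSpace.toDual_apply_apply] using this
  have h1 : Module.finrank ℝ K = r := by
    rw [hK, finrank_span_eq_card hu, Fintype.card_fin]
  have h2 := Submodule.finrank_add_finrank_orthogonal K
  have h3 := LinearMap.finrank_range_add_finrank_ker (M : E →ₗ[ℝ] (Fin r → ℝ))
  have hrange : LinearMap.range (M : E →ₗ[ℝ] (Fin r → ℝ)) = LinearMap.range (M : E →ₗ[ℝ] (Fin r → ℝ)) := by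
    ext x; simp [LinearMap.mem_range]
  have hker' : LinearMap.ker (M : E →ₗ[ℝ] (Fin r → ℝ)) = LinearMap.ker (M : E →ₗ[ℝ] (Fin r → ℝ)) := by
    ext x; simp [LinearMap.mem_ker]
  rw [hrange, hker', hker] at h3
  have h4 : Module.finrank ℝ (Fin r → ℝ) = r := by simp
  apply Submodule.eq_top_of_finrank_eq
  rw [h4]
  omega

/-- Through a point where `Φ` is a strict submersion, every vector in the kernel of the
derivative is the velocity of a curve staying in the level set of `Φ`. -/
lemma aux_exists_curve {E F : Type*} [NormedAddCommGroup E] [NormedSpace ℝ E] [CompleteSpace E]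
    [NormedAddCommGroup F] [NormedSpace ℝ F] [FiniteDimensional ℝ F]
    {Φ : E → F} {L : E →L[ℝ] F} {q : E} (hΦ : HasStrictFDerivAt Φ L q)
    (hL : LinearMap.range (L : E →ₗ[ℝ] F) = ⊤) {v : E} (hv : v ∈ LinearMap.ker (L : E →ₗ[ℝ] F)) :
    ∃ γ : ℝ → E, γ 0 = q ∧ HasDerivAt γ v 0 ∧ ∀ᶠ t in 𝓝 (0 : ℝ), Φ (γ t) = Φ q := by
  set v' : LinearMap.ker (L : E →ₗ[ℝ] F) := ⟨v, hv⟩ with hv'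
  refine ⟨fun t => hΦ.implicitFunction Φ L hL (Φ q) (t • v'), ?_, ?_, ?_⟩
  · simpa using hΦ.implicitFunction_apply_image hL
  · have h1 := hΦ.to_implicitFunction hL
    have h2 : HasDerivAt (fun t : ℝ => t • v') v' 0 := by
      simpa using (hasDerivAt_id (0 : ℝ)).smul_const v'
    have h1' : HasFDerivAt (hΦ.implicitFunction Φ L hL (Φ q))
        ((LinearMap.ker (L : E →ₗ[ℝ] F)).subtypeL) ((fun t : ℝ => t • v') 0) := by
      simpa using h1.hasFDerivAt
    exact h1'.comp_hasDerivAt (0 : ℝ) h2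
  · have h3 := hΦ.map_implicitFunction_eq hL
    have h4 : Filter.Tendsto (fun t : ℝ => ((Φ q, t • v') : F × LinearMap.ker (L : E →ₗ[ℝ] F)))
        (𝓝 0) (𝓝 (Φ q, 0)) := by
      apply Filter.Tendsto.prodMk_nhds tendsto_const_nhds
      have : Filter.Tendsto (fun t : ℝ => t • v') (𝓝 0) (𝓝 ((0 : ℝ) • v')) :=
        (continuous_id.smul continuous_const).tendsto 0
      simpa using this
    exact h4.eventually h3

/-- the critical points of `g = f_k` on the boundary `φ⁻¹(δ) ∩ S_ε`
of the Milnor fibre of `φ = (f_1,…,f_{k-1})` lie in `{|g| ≥ (√3/2)·C·ε^N}`.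
(Here the number of components is `k = m + 1`.) -/
theorem statement8 {n m : ℕ} (hm : 1 ≤ m) (hmn : m + 2 ≤ n)
    (f : Fin (m + 1) → Euc n → ℝ) (hgerm : AnalyticGermAtZero f) (hnc : NonConstantGerm f)
    (ha : MilnorCondA f) (hb : MilnorCondB f)
    (C : ℝ) (hC : 0 < C) (N : ℕ) (hN : 0 < N)
    (hLoj : ∀ᶠ x in 𝓝 (0 : Euc n), x ∈ sigmaFRho f \ zeroSet f →
      C * ‖x‖ ^ N ≤ ‖mapOf f x‖) :
    ∃ ε₁ > (0:ℝ), ∀ ε : ℝ, 0 < ε → ε ≤ ε₁ → ∃ δε > (0:ℝ),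
      ∀ δ : Euc m, 0 < ‖δ‖ → ‖δ‖ < δε →
        ∀ q : Euc n,
          IsCritPtOn (f (Fin.last m))
            ({x | ∀ i : Fin m, f i.castSucc x = δ i} ∩ sphere (0 : Euc n) ε) q →
          Real.sqrt 3 / 2 * C * ε ^ N ≤ |f (Fin.last m) q| := by
  classical
  obtain ⟨hf0, hfa⟩ := hgerm
  have hA : ∀ᶠ x in 𝓝 (0 : Euc n), (∀ i, AnalyticAt ℝ (f i) x) ∧
      (x ∈ sigmaFRho f \ zeroSet f → C * ‖x‖ ^ N ≤ ‖mapOf f x‖) :=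
    (Filter.eventually_all.2 hfa).and hLoj
  rw [Metric.eventually_nhds_iff] at hA
  obtain ⟨r, hr, hball⟩ := hA
  refine ⟨r / 2, by positivity, fun ε hε hεr => ⟨C * ε ^ N / 2, by positivity,
    fun δ hδ hδε q hq => ?_⟩⟩
  obtain ⟨⟨hqδ, hqs⟩, hcrit⟩ := hq
  have hqnorm : ‖q‖ = ε := by simpa using hqs
  have hqlt : dist q 0 < r := by rw [dist_zero_right, hqnorm]; linarith
  obtain ⟨han, hloj⟩ := hball hqlt
  -- Step 1: q lies in Σ_{F,ρ}
  have hqSig : q ∈ sigmaFRho f := by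
    by_contra hSig
    have hind : LinearIndependent ℝ fun j : Option (Fin (m + 1)) =>
        j.elim (gradient (sqDist n) q) fun i => gradient (f i) q := not_not.1 hSig
    set w : Option (Fin (m + 1)) → Euc n :=
      fun j => j.elim (gradient (sqDist n) q) fun i => gradient (f i) q with hw
    set e : Fin (m + 1) → Option (Fin (m + 1)) :=
      fun j => Fin.lastCases (motive := fun _ => Option (Fin (m + 1))) none
        (fun i => some i.castSucc) j with he
    set u : Fin (m + 1) → Euc n := fun j => w (e j) with hu
    have hein : Function.Injective e := by
      intro a b hab
      induction a using Fin.lastCases with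
      | last =>
        induction b using Fin.lastCases with
        | last => rfl
        | cast j => simp [he] at hab
      | cast i =>
        induction b using Fin.lastCases with
        | last => simp [he] at hab
        | cast j =>
          simp only [he, Fin.lastCases_castSucc, Option.some.injEq] at hab
          exact hab
    have huind : LinearIndependent ℝ u := hind.comp e hein
    set K : Submodule ℝ (Euc n) := Submodule.span ℝ (Set.range u) with hK
    set G : Euc n := gradient (f (Fin.last m)) q with hG
    have hGnot : G ∉ K := by
      have hnotmem : some (Fin.last m) ∉ Set.range e := by
        rintro ⟨j, hj⟩
        induction j using Fin.lastCases with
        | last => simp [he] at hj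
        | cast i =>
          simp only [he, Fin.lastCases_castSucc, Option.some.injEq] at hj
          exact absurd hj (Fin.castSucc_lt_last i).ne
      have h1 := hind.notMem_span_image (s := Set.range e) hnotmem
      have h2 : Set.range u = w '' Set.range e := by
        rw [hu]
        exact Set.range_comp w e
      rw [hK, h2]
      exact h1
    haveI : FiniteDimensional ℝ K := FiniteDimensional.span_of_finite ℝ (Set.finite_range u)
    set v : Euc n := G - (K.orthogonalProjection G : Euc n) with hv
    have hvK : v ∈ Kᗮ := Submodule.sub_starProjection_mem_orthogonal G
    have hvne : v ≠ 0 := by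
      intro h
      apply hGnot
      have : G = (K.orthogonalProjection G : Euc n) := by
        rw [hv] at h; rwa [sub_eq_zero] at h
      rw [this]; exact (K.orthogonalProjection G).2
    have hinner : ∀ j, ⟪u j, v⟫ = 0 := fun j =>
      (Submodule.mem_orthogonal K v).1 hvK _ (Submodule.subset_span ⟨j, rfl⟩)
    have hGv : ⟪G, v⟫ = ‖v‖ ^ 2 := by
      have hsplit : G = v + (K.orthogonalProjection G : Euc n) := by
        rw [hv]; abel
      have hperp : ⟪((K.orthogonalProjection G : Euc n)), v⟫ = 0 :=
        (Submodule.mem_orthogonal K v).1 hvK _ (K.orthogonalProjection G).2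
      rw [hsplit, inner_add_left, hperp, add_zero, real_inner_self_eq_norm_sq]
    -- the submersion Φ = (f₁,…,f_m, ρ)
    set Φ : Euc n → (Fin (m + 1) → ℝ) := fun x j =>
      Fin.lastCases (motive := fun _ => ℝ) (sqDist n x) (fun i => f i.castSucc x) j with hΦdef
    set L : Euc n →L[ℝ] (Fin (m + 1) → ℝ) := ContinuousLinearMap.pi
      fun j => (InnerProductSpace.toDual ℝ (Euc n) (u j) : Euc n →L[ℝ] ℝ) with hL
    have hΦL : HasStrictFDerivAt Φ L q := by
      apply hasStrictFDerivAt_pi'.2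
      intro j
      have hproj : (ContinuousLinearMap.proj j).comp L =
          (InnerProductSpace.toDual ℝ (Euc n) (u j) : Euc n →L[ℝ] ℝ) := by
        rw [hL]; exact ContinuousLinearMap.proj_pi _ j
      rw [hproj]
      induction j using Fin.lastCases with
      | last =>
        have hcomp : (fun x => Φ x (Fin.last m)) = sqDist n := by
          funext x; simp [hΦdef]
        have hud : InnerProductSpace.toDual ℝ (Euc n) (u (Fin.last m)) =
            fderiv ℝ (sqDist n) q := by
          have : u (Fin.last m) = gradient (sqDist n) q := by simp [hu, he, hw]
          rw [this, gradient]
          exact LinearIsometryEquiv.apply_symm_apply _ _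
        rw [hcomp, hud]
        have hsq : ContDiffAt ℝ 1 (sqDist n) q := by
          have : ContDiff ℝ 1 (fun x : Euc n => ‖x‖ ^ 2) := contDiff_norm_sq ℝ
          exact this.contDiffAt
        exact hsq.hasStrictFDerivAt one_ne_zero
      | cast i =>
        have hcomp : (fun x => Φ x i.castSucc) = f i.castSucc := by
          funext x; simp [hΦdef]
        have hud : InnerProductSpace.toDual ℝ (Euc n) (u i.castSucc) =
            fderiv ℝ (f i.castSucc) q := by
          have : u i.castSucc = gradient (f i.castSucc) q := by simp [hu, he, hw]
          rw [this, gradient]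
          exact LinearIsometryEquiv.apply_symm_apply _ _
        rw [hcomp, hud]
        exact (han i.castSucc).hasStrictFDerivAt
    have hLtop : LinearMap.range (L : Euc n →ₗ[ℝ] (Fin (m + 1) → ℝ)) = ⊤ := aux_range_pi_toDual huind
    have hvker : v ∈ LinearMap.ker (L : Euc n →ₗ[ℝ] (Fin (m + 1) → ℝ)) := by
      rw [LinearMap.mem_ker]
      funext j
      simpa [hL, ContinuousLinearMap.pi_apply, InnerProductSpace.toDual_apply_apply] using hinner j
    obtain ⟨γ, hγ0, hγd, hγΦ⟩ := aux_exists_curve hΦL hLtop hvker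
    have hvt : v ∈ tangentVecs
        ({x | ∀ i : Fin m, f i.castSucc x = δ i} ∩ sphere (0 : Euc n) ε) q := by
      refine ⟨γ, hγ0, ?_, hγd⟩
      filter_upwards [hγΦ] with t ht
      constructor
      · intro i
        have h1 := congrFun ht i.castSucc
        simp only [hΦdef, Fin.lastCases_castSucc] at h1
        rw [h1]; exact hqδ i
      · have h1 := congrFun ht (Fin.last m)
        simp only [hΦdef, Fin.lastCases_last] at h1
        have h2 : ‖γ t‖ ^ 2 = ε ^ 2 := by
          have : sqDist n q = ε ^ 2 := by rw [sqDist, hqnorm]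
          rw [← this]; exact h1
        have h3 : ‖γ t‖ = ε := by
          have := congrArg Real.sqrt h2
          rwa [Real.sqrt_sq (norm_nonneg _), Real.sqrt_sq hε.le] at this
        simpa [mem_sphere_iff_norm] using h3
    have hzero := hcrit v hvt
    have hfd : fderiv ℝ (f (Fin.last m)) q v = ⟪G, v⟫ := by
      rw [hG, gradient]
      exact (InnerProductSpace.toDual_symm_apply).symm
    rw [hfd, hGv] at hzero
    exact hvne (by simpa using hzero)
  -- Step 2: q ∉ V
  have hqV : q ∉ zeroSet f := by
    intro hz
    obtain ⟨i, hi⟩ : ∃ i, δ i ≠ 0 := by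
      by_contra h
      push_neg at h
      have hδ0 : δ = 0 := by
        ext i; exact h i
      rw [hδ0] at hδ; simp at hδ
    exact hi ((hqδ i).symm.trans (hz i.castSucc))
  have hF := hloj ⟨hqSig, hqV⟩
  rw [hqnorm] at hF
  -- Step 3: norm computation and conclusion
  have hnormF : ‖mapOf f q‖ ^ 2 = ‖δ‖ ^ 2 + (f (Fin.last m) q) ^ 2 := by
    have h1 : ‖mapOf f q‖ ^ 2 = ∑ j, (f j q) ^ 2 := by
      rw [EuclideanSpace.norm_eq, Real.sq_sqrt (by positivity)]
      refine Finset.sum_congr rfl fun j _ => ?_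
      rw [mapOf]
      simp [sq_abs]
    have h2 : ‖δ‖ ^ 2 = ∑ i, (δ i) ^ 2 := by
      rw [EuclideanSpace.norm_eq, Real.sq_sqrt (by positivity)]
      exact Finset.sum_congr rfl fun i _ => by rw [Real.norm_eq_abs, sq_abs]
    rw [h1, Fin.sum_univ_castSucc, h2]
    congr 1
    exact Finset.sum_congr rfl fun i _ => by rw [hqδ i]
  have hce : 0 < C * ε ^ N := mul_pos hC (pow_pos hε N)
  have hF0 : (0:ℝ) ≤ ‖mapOf f q‖ := norm_nonneg _
  have h1 : (C * ε ^ N) ^ 2 ≤ ‖mapOf f q‖ ^ 2 := by nlinarith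
  have ha2 : ‖δ‖ ^ 2 < (C * ε ^ N / 2) ^ 2 := by nlinarith [norm_nonneg δ]
  have h2 : 3 / 4 * (C * ε ^ N) ^ 2 ≤ (f (Fin.last m) q) ^ 2 := by nlinarith
  nlinarith [sq_abs (f (Fin.last m) q), abs_nonneg (f (Fin.last m) q),
    Real.sq_sqrt (by norm_num : (0:ℝ) ≤ 3), Real.sqrt_nonneg 3]

end
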